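/- The number of 2-Motzkin paths of length n equals the Catalan number C_{n+1}. -/
import Mathlib


/-- Steps of a 2-Motzkin path: up, down, red horizontal, blue horizontal. -/
inductive Step2 where
  | up : Step2
  | down : Step2
  | red : Step2
  | blue : Step2
deriving DecidableEq

/-- The height change of a step. -/
def Step2.h : Step2 → ℤ
  | .up => 1
  | .down => -1
  | .red => 0
  | .blue => 0

/-- A list of steps is a 2-Motzkin path if it ends at height 0 and
no prefix goes below the x-axis. -/
def IsTwoMotzkin (p : List Step2) : Prop :=
  (p.map Step2.h).sum = 0 ∧ ∀ q : List Step2, q <+: p → 0 ≤ (q.map Step2.h).sum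

open DyckStep List

namespace TwoMotzkinAux

/-- Height of a Dyck step. -/
def hh : DyckStep → ℤ
  | U => 1
  | D => -1

/-- Encode a 2-Motzkin step as a pair of Dyck steps. -/
def f : Step2 → List DyckStep
  | .up => [U, U]
  | .down => [D, D]
  | .red => [U, D]
  | .blue => [D, U]

/-- Encode a 2-Motzkin path. -/
def enc : List Step2 → List DyckStep
  | [] => []
  | s :: p => f s ++ enc p

/-- Decode a pair of Dyck steps. -/
def g : DyckStep → DyckStep → Step2
  | U, U => .up
  | D, D => .down
  | U, D => .red
  | D, U => .blue

/-- Decode a list of Dyck steps in pairs. -/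
def dec : List DyckStep → List Step2
  | a :: b :: rest => g a b :: dec rest
  | _ => []

lemma f_g (a b : DyckStep) : f (g a b) = [a, b] := by
  cases a <;> cases b <;> rfl

lemma dec_f (s : Step2) (l : List DyckStep) : dec (f s ++ l) = s :: dec l := by
  cases s <;> rfl

lemma dec_enc (p : List Step2) : dec (enc p) = p := by
  induction p with
  | nil => rfl
  | cons s p ih => rw [enc, dec_f, ih]

lemma enc_dec : ∀ (w : List DyckStep), w.length % 2 = 0 → enc (dec w) = w
  | [], _ => rfl
  | [a], h => by simp at h
  | a :: b :: rest, h => by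
    rw [dec, enc, f_g, enc_dec rest (by simp only [length_cons] at h ⊢; omega)]
    rfl

lemma length_enc (p : List Step2) : (enc p).length = 2 * p.length := by
  induction p with
  | nil => rfl
  | cons s p ih => cases s <;> simp [enc, f, ih] <;> omega

lemma sum_f (s : Step2) : ((f s).map hh).sum = 2 * s.h := by
  cases s <;> rfl

lemma sum_enc (p : List Step2) : ((enc p).map hh).sum = 2 * (p.map Step2.h).sum := by
  induction p with
  | nil => rfl
  | cons s p ih =>
    rw [enc, map_append, sum_append, sum_f, ih]
    simp [mul_add]

lemma count_sub (l : List DyckStep) :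
    (l.count U : ℤ) - l.count D = (l.map hh).sum := by
  induction l with
  | nil => rfl
  | cons a l ih => cases a <;> simp [count_cons, hh, ← ih] <;> ring

lemma prefix_cons2 {α : Type*} {a b : α} {l t : List α} (h : t <+: a :: b :: l) :
    t = [] ∨ t = [a] ∨ ∃ t', t = a :: b :: t' ∧ t' <+: l := by
  match t with
  | [] => exact Or.inl rfl
  | [x] =>
    rw [cons_prefix_cons] at h
    exact Or.inr (Or.inl (by rw [h.1]))
  | x :: y :: t' =>
    rw [cons_prefix_cons] at h
    obtain ⟨rfl, h⟩ := h
    rw [cons_prefix_cons] at h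
    obtain ⟨rfl, h⟩ := h
    exact Or.inr (Or.inr ⟨t', rfl, h⟩)

lemma hh_ge (a : DyckStep) : -1 ≤ hh a := by cases a <;> simp [hh]

lemma enc_cons_pair (s : Step2) (p : List Step2) :
    ∃ a b, enc (s :: p) = a :: b :: enc p ∧ hh a + hh b = 2 * s.h := by
  cases s <;> exact ⟨_, _, rfl, rfl⟩

lemma prefix_enc_bound : ∀ (p : List Step2) (c : ℤ),
    (∀ q, q <+: p → 0 ≤ c + (q.map Step2.h).sum) →
    ∀ t, t <+: enc p → -1 ≤ 2 * c + (t.map hh).sum := by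
  intro p
  induction p with
  | nil =>
    intro c hc t ht
    have h0 : 0 ≤ c := by simpa using hc [] (by simp)
    rw [show enc [] = [] from rfl, prefix_nil] at ht
    subst ht
    simp only [map_nil, sum_nil]
    linarith
  | cons s p ih =>
    intro c hc t ht
    have h0 : 0 ≤ c := by simpa using hc [] (by simp)
    obtain ⟨a, b, hab, hsum⟩ := enc_cons_pair s p
    rw [hab] at ht
    rcases prefix_cons2 ht with rfl | rfl | ⟨t', rfl, ht'⟩
    · simpa using by linarith
    · have := hh_ge a
      simp only [map_cons, map_nil, sum_cons, sum_nil]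
      linarith
    · have h1 : ∀ q, q <+: p → 0 ≤ (c + s.h) + (q.map Step2.h).sum := by
        intro q hq
        have := hc (s :: q) (cons_prefix_cons.mpr ⟨rfl, hq⟩)
        simp only [map_cons, sum_cons] at this
        linarith
      have h2 := ih (c + s.h) h1 t' ht'
      simp only [map_cons, sum_cons]
      linarith

lemma enc_append (p q : List Step2) : enc (p ++ q) = enc p ++ enc q := by
  induction p with
  | nil => rfl
  | cons s p ih => simp [enc, ih]

lemma enc_prefix {q p : List Step2} (h : q <+: p) : enc q <+: enc p := by
  obtain ⟨r, rfl⟩ := h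
  rw [enc_append]
  exact prefix_append _ _

/-- The Dyck word associated with a 2-Motzkin path. -/
def toDyck (p : List Step2) (hp : IsTwoMotzkin p) : DyckWord where
  toList := U :: (enc p ++ [D])
  count_U_eq_count_D := by
    have h1 := count_sub (U :: (enc p ++ [D]))
    have h2 : ((U :: (enc p ++ [D])).map hh).sum = 0 := by
      simp [map_append, sum_append, sum_enc, hp.1, hh]
    omega
  count_D_le_count_U i := by
    have key : 0 ≤ (((U :: (enc p ++ [D])).take i).map hh).sum := by
      cases i with
      | zero => simp
      | succ j =>
        rw [take_succ_cons]
        have ht : (enc p ++ [D]).take j <+: enc p ++ [D] := take_prefix _ _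
        have hcase : (enc p ++ [D]).take j <+: enc p ∨
            (enc p ++ [D]).take j = enc p ++ [D] := by
          rcases le_or_gt j (enc p).length with hlen | hlen
          · left
            refine prefix_of_prefix_length_le ht (prefix_append _ _) ?_
            rw [length_take]
            omega
          · right
            refine take_of_length_le ?_
            simp only [length_append, length_cons, length_nil]
            omega
        rcases hcase with hcase | hcase
        · have hb := prefix_enc_bound p 0 (fun q hq => by simpa using hp.2 q hq)
            ((enc p ++ [D]).take j) hcase
          simp only [map_cons, sum_cons, hh]
          linarith
        · rw [hcase]
          simp [map_append, sum_append, sum_enc, hp.1, hh]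
    have h1 := count_sub ((U :: (enc p ++ [D])).take i)
    omega

lemma semilength_toDyck (p : List Step2) (hp : IsTwoMotzkin p) :
    (toDyck p hp).semilength = p.length + 1 := by
  have := (toDyck p hp).two_mul_semilength_eq_length
  have h2 : (toDyck p hp).toList.length = 2 * p.length + 2 := by
    show (U :: (enc p ++ [D])).length = _
    simp only [length_cons, length_append, length_nil, length_enc]
  omega

lemma dyck_ne_zero {d : DyckWord} {n : ℕ} (hd : d.semilength = n + 1) : d ≠ 0 := by
  intro h0
  rw [h0] at hd
  simp at hd

lemma invFun_spec (n : ℕ) (d : DyckWord) (hd : d.semilength = n + 1) :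
    (dec d.toList.dropLast.tail).length = n ∧ IsTwoMotzkin (dec d.toList.dropLast.tail) := by
  have hne : d ≠ 0 := dyck_ne_zero hd
  have hrep := d.cons_tail_dropLast_concat hne
  set w := d.toList.dropLast.tail with hwdef
  have hlen : d.toList.length = 2 * (n + 1) := by
    rw [← d.two_mul_semilength_eq_length, hd]
  have hwlen : w.length = 2 * n := by
    have : (U :: (w ++ [D])).length = d.toList.length := by
      rw [← hrep]; rfl
    simp only [length_cons, length_append, length_nil] at this
    omega
  have hED : enc (dec w) = w := enc_dec w (by omega)
  have hsumd : (d.toList.map hh).sum = 0 := by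
    have := count_sub d.toList
    have := d.count_U_eq_count_D
    omega
  have hsumw : (w.map hh).sum = 0 := by
    rw [← hrep] at hsumd
    simp only [cons_append, map_cons, map_append, sum_cons, sum_append, map_nil,
      sum_nil, hh] at hsumd
    linarith
  refine ⟨?_, ?_, ?_⟩
  · have := length_enc (dec w)
    rw [hED] at this
    omega
  · have := sum_enc (dec w)
    rw [hED, hsumw] at this
    omega
  · intro q hq
    have hpre : enc q <+: w := hED ▸ enc_prefix hq
    have hUpre : U :: enc q <+: d.toList := by
      rw [← hrep, cons_append, cons_prefix_cons]
      exact ⟨rfl, hpre.trans (prefix_append _ _)⟩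
    have htake : U :: enc q = d.toList.take (U :: enc q).length :=
      prefix_iff_eq_take.mp hUpre
    have hcnt := d.count_D_le_count_U (U :: enc q).length
    rw [← htake] at hcnt
    have h1 := count_sub (U :: enc q)
    have h2 : ((U :: enc q).map hh).sum = 1 + 2 * (q.map Step2.h).sum := by
      simp [sum_enc, hh]
    omega

/-- The equivalence between 2-Motzkin paths of length `n` and Dyck words of
semilength `n + 1`. -/
def motzkinEquiv (n : ℕ) :
    {p : List Step2 // p.length = n ∧ IsTwoMotzkin p} ≃
      {d : DyckWord // d.semilength = n + 1} where
  toFun := fun p => ⟨toDyck p.1 p.2.2, by rw [semilength_toDyck, p.2.1]⟩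
  invFun := fun d => ⟨dec d.1.toList.dropLast.tail, invFun_spec n d.1 d.2⟩
  left_inv := fun p => by
    apply Subtype.ext
    show dec (toDyck p.1 p.2.2).toList.dropLast.tail = p.1
    have : (toDyck p.1 p.2.2).toList.dropLast.tail = enc p.1 := by
      show (U :: (enc p.1 ++ [D])).dropLast.tail = enc p.1
      rw [show U :: (enc p.1 ++ [D]) = (U :: enc p.1) ++ [D] by simp, dropLast_concat]
      rfl
    rw [this, dec_enc]
  right_inv := fun d => by
    apply Subtype.ext
    obtain ⟨d, hd⟩ := d
    have hne : d ≠ 0 := dyck_ne_zero hd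
    have hrep := d.cons_tail_dropLast_concat hne
    set w := d.toList.dropLast.tail with hwdef
    have hlen : d.toList.length = 2 * (n + 1) := by
      rw [← d.two_mul_semilength_eq_length, hd]
    have hwlen : w.length = 2 * n := by
      have : (U :: (w ++ [D])).length = d.toList.length := by
        rw [← hrep]; rfl
      simp only [length_cons, length_append, length_nil] at this
      omega
    have hED : enc (dec w) = w := enc_dec w (by omega)
    apply DyckWord.ext
    show U :: (enc (dec w) ++ [D]) = d.toList
    rw [hED, ← hrep]
    rfl

end TwoMotzkinAux

/-- The number of 2-Motzkin paths of length `n` is the Catalan number `C_{n+1}`. -/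
theorem card_twoMotzkin (n : ℕ) :
    Nat.card {p : List Step2 // p.length = n ∧ IsTwoMotzkin p} = catalan (n + 1) := by
  rw [Nat.card_congr (TwoMotzkinAux.motzkinEquiv n), Nat.card_eq_fintype_card,
    DyckWord.card_dyckWord_semilength_eq_catalan]
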